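/- Fix M_G > 0 and M_ρ > 0. Let ū be the rarefaction wave ū(y,s) = min(max(y/s, 0), M_G) and let ρ̄(y,s) = (M_ρ/M_G)(1/s) 𝟙_{(0, M_G s]}(y). Then ρ̄ is a weak solution of the continuity equation ρ̄_s + (ū ρ̄)_y = 0 on ℝ × (0,∞) with initial datum M_ρ δ₀; i.e., for every φ ∈ C_c^∞(ℝ × [0,∞)): ∫₀^∞ ∫_ℝ ρ̄ φ_s dy ds + M_ρ φ(0,0) + ∫₀^∞ ∫_ℝ ρ̄ ū φ_y dy ds = 0. -/

import Mathlib

open MeasureTheory Set Filter Topology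

/-- The rarefaction wave with right state M_G: ū(y,s) = min(max(y/s,0), M_G). -/
noncomputable def rarefaction (MG : ℝ) (y s : ℝ) : ℝ :=
  min (max (y / s) 0) MG

/-- ρ̄(y,s) = (M_ρ/M_G)(1/s) 𝟙_{(0, M_G s]}(y). -/
noncomputable def rhoBar (Mρ MG : ℝ) (y s : ℝ) : ℝ :=
  (Mρ / MG) * (1 / s) * Set.indicator (Set.Ioc 0 (MG * s)) (fun _ => (1:ℝ)) y

section Aux

variable {φ : ℝ × ℝ → ℝ}

lemma aux_hasDerivAt (hφ : Differentiable ℝ φ) (MG v s : ℝ) :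
    HasDerivAt (fun s => φ (MG * s * v, s)) (fderiv ℝ φ (MG * s * v, s) (MG * v, 1)) s := by
  have h1 : HasDerivAt (fun s : ℝ => MG * s * v) (MG * v) s := by
    simpa using ((hasDerivAt_id s).const_mul MG).mul_const v
  have h2 : HasDerivAt (fun s : ℝ => ((MG * s * v, s) : ℝ × ℝ)) ((MG * v, 1) : ℝ × ℝ) s :=
    h1.prodMk (hasDerivAt_id s)
  exact (hφ _).hasFDerivAt.comp_hasDerivAt s h2

lemma aux_deriv_snd (hφ : Differentiable ℝ φ) (y s : ℝ) :
    deriv (fun t => φ (y, t)) s = fderiv ℝ φ (y, s) (0, 1) := by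
  have h2 : HasDerivAt (fun t : ℝ => ((y, t) : ℝ × ℝ)) ((0, 1) : ℝ × ℝ) s :=
    (hasDerivAt_const s y).prodMk (hasDerivAt_id s)
  exact ((hφ _).hasFDerivAt.comp_hasDerivAt s h2).deriv

lemma aux_deriv_fst (hφ : Differentiable ℝ φ) (y s : ℝ) :
    deriv (fun x => φ (x, s)) y = fderiv ℝ φ (y, s) (1, 0) := by
  have h2 : HasDerivAt (fun x : ℝ => ((x, s) : ℝ × ℝ)) ((1, 0) : ℝ × ℝ) y :=
    (hasDerivAt_id y).prodMk (hasDerivAt_const y s)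
  exact ((hφ _).hasFDerivAt.comp_hasDerivAt y h2).deriv

lemma aux_subst (c : ℝ) (hc : 0 < c) (f : ℝ → ℝ) :
    ∫ y in Ioc (0:ℝ) c, f y = c * ∫ v in Icc (0:ℝ) 1, f (c * v) := by
  rw [show (∫ v in Icc (0:ℝ) 1, f (c * v)) = ∫ v in Ioc (0:ℝ) 1, f (c * v) from
    (integral_Icc_eq_integral_Ioc)]
  rw [← intervalIntegral.integral_of_le hc.le, ← intervalIntegral.integral_of_le zero_le_one]
  rw [intervalIntegral.integral_comp_mul_left f hc.ne', mul_zero, mul_one, smul_eq_mul]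
  field_simp

/-- If a continuous function vanishes on `(R, ∞)`, it is integrable on `(0, ∞)`. -/
lemma aux_integrableOn (H : ℝ → ℝ) (R : ℝ) (hR : 0 < R) (hc : Continuous H)
    (h0 : ∀ s, R < s → H s = 0) : IntegrableOn H (Ioi (0:ℝ)) := by
  have h1 : IntegrableOn H (Ioc 0 R) := (hc.integrableOn_Icc).mono_set Ioc_subset_Icc_self
  have h2 : IntegrableOn H (Ioi R) := by
    refine (integrableOn_zero (μ := volume)).congr_fun ?_ measurableSet_Ioi
    exact fun s hs => (h0 s hs).symm
  refine (h1.union h2).mono_set fun x hx => ?_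
  rcases le_or_gt x R with h | h
  · exact Or.inl ⟨hx, h⟩
  · exact Or.inr h

end Aux

/-- For M_G, M_ρ > 0, ρ̄ is a weak solution of the continuity equation
ρ̄_s + (ū ρ̄)_y = 0 on ℝ × (0,∞) with initial datum M_ρ δ₀: for every
φ ∈ C_c^∞(ℝ × [0,∞)),
∫₀^∞ ∫_ℝ ρ̄ φ_s + M_ρ φ(0,0) + ∫₀^∞ ∫_ℝ ρ̄ ū φ_y = 0. -/
theorem rhoBar_weak_solution_continuity (MG Mρ : ℝ) (hMG : 0 < MG) (hMρ : 0 < Mρ) :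
    ∀ φ : ℝ × ℝ → ℝ, ContDiff ℝ (⊤ : ℕ∞) φ → HasCompactSupport φ →
      (∫ s in Set.Ioi (0:ℝ), ∫ y : ℝ,
          rhoBar Mρ MG y s * deriv (fun t => φ (y, t)) s) +
        Mρ * φ (0, 0) +
        (∫ s in Set.Ioi (0:ℝ), ∫ y : ℝ,
          rhoBar Mρ MG y s * rarefaction MG y s * deriv (fun x => φ (x, s)) y) = 0 := by
  intro φ hφ hsupp
  have hφ1 : ContDiff ℝ 1 φ := hφ.of_le (by simp)
  have hdiff : Differentiable ℝ φ := hφ1.differentiable one_ne_zero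
  set D := fderiv ℝ φ with hDdef
  have hDc : Continuous D := hφ1.continuous_fderiv one_ne_zero
  have hDsupp : HasCompactSupport D := hsupp.fderiv (𝕜 := ℝ)
  obtain ⟨C, hC⟩ := hDsupp.exists_bound_of_continuous hDc
  have hC0 : 0 ≤ C := (norm_nonneg _).trans (hC 0)
  obtain ⟨R, hR0, hRsub⟩ : ∃ R : ℝ, 0 < R ∧ tsupport φ ⊆ Metric.closedBall 0 R := by
    obtain ⟨R, hR0, hR⟩ := hsupp.isBounded.subset_closedBall_lt 0 0
    exact ⟨R, hR0, hR⟩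
  have hφR : ∀ p : ℝ × ℝ, R < ‖p‖ → φ p = 0 := by
    intro p hp
    apply image_eq_zero_of_notMem_tsupport
    intro h
    have := hRsub h
    rw [Metric.mem_closedBall, dist_zero_right] at this
    linarith
  have hDR : ∀ p : ℝ × ℝ, R < ‖p‖ → D p = 0 := by
    intro p hp
    by_contra h
    have hmem : p ∈ tsupport φ := support_fderiv_subset (𝕜 := ℝ) h
    have := hRsub hmem
    rw [Metric.mem_closedBall, dist_zero_right] at this
    linarith
  have hbig : ∀ (s : ℝ), R < s → ∀ v : ℝ, R < ‖((MG * s * v, s) : ℝ × ℝ)‖ := by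
    intro s hs v
    have h2 : ‖s‖ ≤ ‖((MG * s * v, s) : ℝ × ℝ)‖ := by
      simpa using norm_snd_le ((MG * s * v, s) : ℝ × ℝ)
    have : s ≤ ‖s‖ := le_abs_self s
    linarith
  -- The four parametrized integrals
  set Ft : ℝ → ℝ := fun s => ∫ v in Icc (0:ℝ) 1, D (MG * s * v, s) (0, 1) with hFtdef
  set Fx : ℝ → ℝ := fun s => ∫ v in Icc (0:ℝ) 1, MG * v * D (MG * s * v, s) (1, 0) with hFxdef
  set F : ℝ → ℝ := fun s => ∫ v in Icc (0:ℝ) 1, φ (MG * s * v, s) with hFdef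
  set G : ℝ → ℝ := fun s => ∫ v in Icc (0:ℝ) 1, D (MG * s * v, s) (MG * v, 1) with hGdef
  have hmap : Continuous fun p : ℝ × ℝ => ((MG * p.1 * p.2, p.1) : ℝ × ℝ) := by fun_prop
  have hDm : Continuous fun p : ℝ × ℝ => D (MG * p.1 * p.2, p.1) := hDc.comp hmap
  -- continuity of the parametrized integrals
  have hFt_cont : Continuous Ft :=
    continuous_parametric_integral_of_continuous
      (f := fun s v => D (MG * s * v, s) (0, 1))
      (hDm.clm_apply continuous_const) isCompact_Icc
  have hFx_cont : Continuous Fx :=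
    continuous_parametric_integral_of_continuous
      (f := fun s v => MG * v * D (MG * s * v, s) (1, 0))
      (by
        have : Continuous fun p : ℝ × ℝ => D (MG * p.1 * p.2, p.1) (1, 0) :=
          hDm.clm_apply continuous_const
        fun_prop) isCompact_Icc
  have hG_cont : Continuous G :=
    continuous_parametric_integral_of_continuous
      (f := fun s v => D (MG * s * v, s) (MG * v, 1))
      (hDm.clm_apply (by fun_prop)) isCompact_Icc
  -- vanishing for large s
  have hFt0 : ∀ s, R < s → Ft s = 0 := by
    intro s hs
    refine integral_eq_zero_of_ae (Eventually.of_forall fun v => ?_)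
    simp [hDR _ (hbig s hs v)]
  have hFx0 : ∀ s, R < s → Fx s = 0 := by
    intro s hs
    refine integral_eq_zero_of_ae (Eventually.of_forall fun v => ?_)
    simp [hDR _ (hbig s hs v)]
  have hG0 : ∀ s, R < s → G s = 0 := by
    intro s hs
    refine integral_eq_zero_of_ae (Eventually.of_forall fun v => ?_)
    simp [hDR _ (hbig s hs v)]
  have hF0big : ∀ s, R < s → F s = 0 := by
    intro s hs
    refine integral_eq_zero_of_ae (Eventually.of_forall fun v => ?_)
    simp [hφR _ (hbig s hs v)]
  -- integrability on (0,∞)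
  have hFt_int : IntegrableOn Ft (Ioi (0:ℝ)) := aux_integrableOn Ft R hR0 hFt_cont hFt0
  have hFx_int : IntegrableOn Fx (Ioi (0:ℝ)) := aux_integrableOn Fx R hR0 hFx_cont hFx0
  have hG_int : IntegrableOn G (Ioi (0:ℝ)) := aux_integrableOn G R hR0 hG_cont hG0
  -- F has derivative G everywhere
  have hFderiv : ∀ s : ℝ, HasDerivAt F (G s) s := by
    intro s
    have bdd_cont : Continuous fun v : ℝ => C * (|MG| * |v| + 1) := by fun_prop
    have bound_int : Integrable (fun v : ℝ => C * (|MG| * |v| + 1))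
        (volume.restrict (Icc (0:ℝ) 1)) := bdd_cont.integrableOn_Icc
    refine (hasDerivAt_integral_of_dominated_loc_of_deriv_le (Metric.ball_mem_nhds s one_pos)
      (F := fun x v => φ (MG * x * v, x))
      (F' := fun x v => D (MG * x * v, x) (MG * v, 1))
      (bound := fun v => C * (|MG| * |v| + 1)) ?_ ?_ ?_ ?_ bound_int ?_).2
    · exact Eventually.of_forall fun x =>
        ((hφ.continuous).comp (by fun_prop : Continuous fun v : ℝ =>
          ((MG * x * v, x) : ℝ × ℝ))).aestronglyMeasurable
    · exact ((hφ.continuous).comp (by fun_prop : Continuous fun v : ℝ =>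
        ((MG * s * v, s) : ℝ × ℝ))).integrableOn_Icc
    · exact ((hDc.comp (by fun_prop : Continuous fun v : ℝ =>
        ((MG * s * v, s) : ℝ × ℝ))).clm_apply (by fun_prop)).aestronglyMeasurable
    · refine Eventually.of_forall fun v => fun x _ => ?_
      calc ‖D (MG * x * v, x) (MG * v, 1)‖
          ≤ ‖D (MG * x * v, x)‖ * ‖((MG * v, 1) : ℝ × ℝ)‖ := ContinuousLinearMap.le_opNorm _ _
        _ ≤ C * (|MG| * |v| + 1) := by
            apply mul_le_mul (hC _) ?_ (norm_nonneg _) hC0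
            rw [Prod.norm_def]
            apply max_le
            · rw [Real.norm_eq_abs, abs_mul]
              nlinarith [mul_nonneg (abs_nonneg MG) (abs_nonneg v)]
            · rw [norm_one]
              nlinarith [mul_nonneg (abs_nonneg MG) (abs_nonneg v)]
    · exact Eventually.of_forall fun v => fun x _ => aux_hasDerivAt hdiff MG v x
  -- F at 0
  have hF00 : F 0 = φ (0, 0) := by
    have h0 : (fun v : ℝ => φ (MG * 0 * v, 0)) = fun _ : ℝ => φ (0, 0) := by
      funext v; norm_num
    show (∫ v in Icc (0:ℝ) 1, φ (MG * 0 * v, 0)) = φ (0, 0)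
    rw [h0, setIntegral_const]
    simp [Real.volume_Icc]
  -- F tends to 0 at ∞
  have hFtop : Tendsto F atTop (𝓝 (0:ℝ)) := by
    refine Tendsto.congr' ?_ tendsto_const_nhds
    filter_upwards [Ioi_mem_atTop R] with s hs
    exact (hF0big s hs).symm
  -- FTC on (0, ∞)
  have hFTC : ∫ s in Ioi (0:ℝ), G s = 0 - F 0 :=
    integral_Ioi_of_hasDerivAt_of_tendsto' (fun x _ => hFderiv x) hG_int hFtop
  -- G = Ft + Fx
  have hGsplit : ∀ s : ℝ, G s = Ft s + Fx s := by
    intro s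
    have e : ∀ v : ℝ, D (MG * s * v, s) (MG * v, 1)
        = D (MG * s * v, s) (0, 1) + MG * v * D (MG * s * v, s) (1, 0) := by
      intro v
      have hv : ((MG * v, 1) : ℝ × ℝ) = (0, 1) + (MG * v) • ((1:ℝ), (0:ℝ)) := by
        simp [Prod.ext_iff]
      rw [hv, map_add, ContinuousLinearMap.map_smul, smul_eq_mul]
    have i1 : Integrable (fun v : ℝ => D (MG * s * v, s) (0, 1))
        (volume.restrict (Icc (0:ℝ) 1)) :=
      ((hDc.comp (by fun_prop : Continuous fun v : ℝ =>
        ((MG * s * v, s) : ℝ × ℝ))).clm_apply (by fun_prop)).integrableOn_Icc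
    have i2 : Integrable (fun v : ℝ => MG * v * D (MG * s * v, s) (1, 0))
        (volume.restrict (Icc (0:ℝ) 1)) := by
      refine Continuous.integrableOn_Icc ?_
      have h3 : Continuous fun v : ℝ => D (MG * s * v, s) (1, 0) :=
        (hDc.comp (by fun_prop : Continuous fun v : ℝ =>
          ((MG * s * v, s) : ℝ × ℝ))).clm_apply (by fun_prop)
      fun_prop
    show (∫ v in Icc (0:ℝ) 1, D (MG * s * v, s) (MG * v, 1)) = _
    simp only [e]
    rw [integral_add i1 i2]
  -- the inner y-integrals for s > 0
  have step1 : ∀ s ∈ Ioi (0:ℝ),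
      (∫ y : ℝ, rhoBar Mρ MG y s * deriv (fun t => φ (y, t)) s) = Mρ * Ft s := by
    intro s hs
    rw [mem_Ioi] at hs
    have hMGs : 0 < MG * s := mul_pos hMG hs
    have e1 : ∀ y : ℝ, rhoBar Mρ MG y s * deriv (fun t => φ (y, t)) s
        = Set.indicator (Ioc 0 (MG * s)) (fun y => Mρ / MG * (1 / s) * D (y, s) (0, 1)) y := by
      intro y
      rw [aux_deriv_snd hdiff]
      unfold rhoBar
      by_cases h : y ∈ Ioc 0 (MG * s)
      · rw [Set.indicator_of_mem h, Set.indicator_of_mem h]; ring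
      · rw [Set.indicator_of_notMem h, Set.indicator_of_notMem h]; ring
    calc (∫ y : ℝ, rhoBar Mρ MG y s * deriv (fun t => φ (y, t)) s)
        = ∫ y : ℝ, Set.indicator (Ioc 0 (MG * s))
            (fun y => Mρ / MG * (1 / s) * D (y, s) (0, 1)) y := by simp only [e1]
      _ = ∫ y in Ioc 0 (MG * s), Mρ / MG * (1 / s) * D (y, s) (0, 1) :=
          integral_indicator measurableSet_Ioc
      _ = (MG * s) * ∫ v in Icc (0:ℝ) 1, Mρ / MG * (1 / s) * D (MG * s * v, s) (0, 1) :=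
          aux_subst (MG * s) hMGs _
      _ = (MG * s) * (Mρ / MG * (1 / s) * Ft s) := by rw [integral_const_mul]
      _ = Mρ * Ft s := by field_simp
  have step2 : ∀ s ∈ Ioi (0:ℝ),
      (∫ y : ℝ, rhoBar Mρ MG y s * rarefaction MG y s * deriv (fun x => φ (x, s)) y)
        = Mρ * Fx s := by
    intro s hs
    rw [mem_Ioi] at hs
    have hMGs : 0 < MG * s := mul_pos hMG hs
    have e2 : ∀ y : ℝ, rhoBar Mρ MG y s * rarefaction MG y s * deriv (fun x => φ (x, s)) y
        = Set.indicator (Ioc 0 (MG * s))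
            (fun y => Mρ / MG * (1 / s) * (y / s) * D (y, s) (1, 0)) y := by
      intro y
      rw [aux_deriv_fst hdiff]
      unfold rhoBar rarefaction
      by_cases h : y ∈ Ioc 0 (MG * s)
      · have h1 : max (y / s) 0 = y / s := max_eq_left (div_nonneg h.1.le hs.le)
        have h2 : min (y / s) MG = y / s := min_eq_left ((div_le_iff₀ hs).2 (by
          have := h.2; linarith))
        rw [Set.indicator_of_mem h, Set.indicator_of_mem h, h1, h2]; ring
      · rw [Set.indicator_of_notMem h, Set.indicator_of_notMem h]; ring
    have e3 : ∀ v : ℝ, Mρ / MG * (1 / s) * ((MG * s * v) / s) * D (MG * s * v, s) (1, 0)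
        = (Mρ / (MG * s)) * (MG * v * D (MG * s * v, s) (1, 0)) := by
      intro v; field_simp
    calc (∫ y : ℝ, rhoBar Mρ MG y s * rarefaction MG y s * deriv (fun x => φ (x, s)) y)
        = ∫ y : ℝ, Set.indicator (Ioc 0 (MG * s))
            (fun y => Mρ / MG * (1 / s) * (y / s) * D (y, s) (1, 0)) y := by simp only [e2]
      _ = ∫ y in Ioc 0 (MG * s), Mρ / MG * (1 / s) * (y / s) * D (y, s) (1, 0) :=
          integral_indicator measurableSet_Ioc
      _ = (MG * s) * ∫ v in Icc (0:ℝ) 1,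
            Mρ / MG * (1 / s) * ((MG * s * v) / s) * D (MG * s * v, s) (1, 0) :=
          aux_subst (MG * s) hMGs _
      _ = (MG * s) * ∫ v in Icc (0:ℝ) 1,
            (Mρ / (MG * s)) * (MG * v * D (MG * s * v, s) (1, 0)) := by simp only [e3]
      _ = (MG * s) * ((Mρ / (MG * s)) * Fx s) := by rw [integral_const_mul]
      _ = Mρ * Fx s := by field_simp
  -- assemble
  have hA : (∫ s in Ioi (0:ℝ), ∫ y : ℝ, rhoBar Mρ MG y s * deriv (fun t => φ (y, t)) s)
      = Mρ * ∫ s in Ioi (0:ℝ), Ft s := by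
    rw [← integral_const_mul]
    exact setIntegral_congr_fun measurableSet_Ioi step1
  have hB : (∫ s in Ioi (0:ℝ),
        ∫ y : ℝ, rhoBar Mρ MG y s * rarefaction MG y s * deriv (fun x => φ (x, s)) y)
      = Mρ * ∫ s in Ioi (0:ℝ), Fx s := by
    rw [← integral_const_mul]
    exact setIntegral_congr_fun measurableSet_Ioi step2
  have hsum : (∫ s in Ioi (0:ℝ), Ft s) + (∫ s in Ioi (0:ℝ), Fx s) = ∫ s in Ioi (0:ℝ), G s := by
    rw [← integral_add hFt_int hFx_int]
    exact setIntegral_congr_fun measurableSet_Ioi fun s _ => (hGsplit s).symm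
  rw [hA, hB]
  have : (∫ s in Ioi (0:ℝ), Ft s) + (∫ s in Ioi (0:ℝ), Fx s) = -φ (0, 0) := by
    rw [hsum, hFTC, hF00]; ring
  linear_combination Mρ * this
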